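/- arXiv:1403.2564 — 2 statements merged into one kernel-verified Lean document; each statement's English description precedes it below -/
import Mathlib

section
/- Let n ≥ 3 and t ∈ ZMod n with t ≠ 0 and t² = 1. Then on ZMod n with operation a * b = t*a + b: (i) the left invertive law (a*b)*c = (c*b)*a holds; (ii) 0 is a left identity, i.e., 0 * x = x for all x; (iii) every element x has a two-sided inverse -t*x with respect to 0, i.e., (-t*x) * x = 0 and x * (-t*x) = 0. -/
theorem stmt_7 (n : ℕ) (hn : 3 ≤ n) (t : ZMod n) (ht : t ≠ 0) (h : t ^ 2 = 1) :
    (∀ a b c : ZMod n, t * (t * a + b) + c = t * (t * c + b) + a) ∧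
    (∀ x : ZMod n, t * (0 : ZMod n) + x = x) ∧
    (∀ x : ZMod n, t * (-t * x) + x = 0 ∧ t * x + (-t * x) = 0) := by
  have h2 : t * t = 1 := by rw [← sq]; exact h
  refine ⟨fun a b c => ?_, fun x => by ring, fun x => ⟨?_, by ring⟩⟩
  · ring_nf
    rw [h]; ring
  · ring_nf
    rw [h]; ring
end

section
/- Let p be an odd prime and t, u ∈ ZMod p nonzero with t² = u. Then the AG-groupoid on ZMod p with operation a * b = t*a + u*b is a cancellative, transitively commutative, T³-AG-groupoid. -/
theorem stmt_19 (p : ℕ) [Fact p.Prime] (hp : p ≠ 2) (t u : ZMod p)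
    (ht : t ≠ 0) (hu : u ≠ 0) (h : t ^ 2 = u) :
    ((∀ a x y : ZMod p, t * a + u * x = t * a + u * y → x = y) ∧
     (∀ a x y : ZMod p, t * x + u * a = t * y + u * a → x = y)) ∧
    (∀ a b c : ZMod p, t * a + u * b = t * b + u * a → t * b + u * c = t * c + u * b →
      t * a + u * c = t * c + u * a) ∧
    (∀ a b c : ZMod p,
      (t * a + u * b = t * a + u * c → t * b + u * a = t * c + u * a) ∧
      (t * b + u * a = t * c + u * a → t * a + u * b = t * a + u * c)) := by
  have hcl : ∀ a x y : ZMod p, t * a + u * x = t * a + u * y → x = y := by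
    intro a x y hxy
    exact mul_left_cancel₀ hu (by linear_combination hxy)
  have hcr : ∀ a x y : ZMod p, t * x + u * a = t * y + u * a → x = y := by
    intro a x y hxy
    exact mul_left_cancel₀ ht (by linear_combination hxy)
  refine ⟨⟨hcl, hcr⟩, ?_, ?_⟩
  · intro a b c h1 h2
    rcases eq_or_ne t u with htu | htu
    · subst htu; ring
    · have hab : a = b := by
        have : (t - u) * (a - b) = 0 := by ring_nf; linear_combination h1
        rcases mul_eq_zero.mp this with h' | h'
        · exact absurd (sub_eq_zero.mp h') htu
        · exact sub_eq_zero.mp h'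
      subst hab; exact h2
  · intro a b c
    exact ⟨fun h1 => by rw [hcl a b c h1], fun h1 => by rw [hcr a b c h1]⟩
end
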